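/- arXiv:1606.03440 — 5 statements merged into one kernel-verified Lean document; each statement's English description precedes it below -/
import Mathlib

section
/- For every 1 ≤ i ≤ n one has β_i^+ + Σ_{j<i} a_{ji} β_j^+ = e_i. Equivalently, in the root lattice of a generalized Cartan matrix A, the roots β_i^+ = s_1⋯s_{i−1}α_i satisfy s_1⋯s_{i−1}α_i + Σ_{j<i} a_{ji}·s_1⋯s_{j−1}α_j = α_i. -/
open Finset

/-- The simple reflection `s_i` of the Weyl group of `A` acting on the root lattice
in the basis of simple roots: `R_i(e_j) = e_j - a_{ij} e_i`. -/
def Rmap {n : ℕ} (A : Matrix (Fin n) (Fin n) ℤ) (i : Fin n) (v : Fin n → ℤ) : Fin n → ℤ :=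
  v - (∑ j, A i j * v j) • Pi.single i (1 : ℤ)

/-- `R` indexed by a natural number (acting trivially out of range). -/
def Rnat {n : ℕ} (A : Matrix (Fin n) (Fin n) ℤ) (j : ℕ) (v : Fin n → ℤ) : Fin n → ℤ :=
  if h : j < n then Rmap A ⟨j, h⟩ v else v

/-- `β_i^+ = s_1 ⋯ s_{i-1} α_i` in simple root coordinates (indices 0-based:
`β_i^+ = R_0 (R_1 (⋯ (R_{i-1} e_i)))`). -/
def betaPlus {n : ℕ} (A : Matrix (Fin n) (Fin n) ℤ) (i : Fin n) : Fin n → ℤ :=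
  (List.range i.val).foldr (fun j v => Rnat A j v) (Pi.single i (1 : ℤ))

/-!
Write `P_k := R_0 ∘ ⋯ ∘ R_{k-1}`, so that `β_i^+ = P_i e_i`. Since `R_k e_i = e_i - a_{ki} e_k` and
`P_k` is linear, `P_{k+1} e_i = P_k e_i - a_{ki} β_k^+`; telescoping over `k < i` gives
`P_i e_i = e_i - Σ_{k<i} a_{ki} β_k^+`.
-/

section

variable {n : ℕ} (A : Matrix (Fin n) (Fin n) ℤ)

/-- `P_k`; in the paper's 1-based indexing this is `s_1 ⋯ s_k`. -/
def reflectPrefix (k : ℕ) (v : Fin n → ℤ) : Fin n → ℤ :=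
  (List.range k).foldr (fun j v => Rnat A j v) v

theorem reflectPrefix_zero (v : Fin n → ℤ) : reflectPrefix A 0 v = v :=
  rfl

theorem reflectPrefix_succ (k : ℕ) (v : Fin n → ℤ) :
    reflectPrefix A (k + 1) v = reflectPrefix A k (Rnat A k v) := by
  simp only [reflectPrefix, List.range_succ, List.foldr_append, List.foldr_cons, List.foldr_nil]

theorem Rmap_sub_smul (j : Fin n) (c : ℤ) (v w : Fin n → ℤ) :
    Rmap A j (v - c • w) = Rmap A j v - c • Rmap A j w := by
  ext x
  simp only [Rmap, Pi.sub_apply, Pi.smul_apply, smul_eq_mul, mul_sub, Finset.sum_sub_distrib,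
    mul_left_comm _ c, ← Finset.mul_sum]
  ring

theorem Rnat_sub_smul (k : ℕ) (c : ℤ) (v w : Fin n → ℤ) :
    Rnat A k (v - c • w) = Rnat A k v - c • Rnat A k w := by
  unfold Rnat
  split
  · exact Rmap_sub_smul A _ c v w
  · rfl

theorem reflectPrefix_sub_smul (k : ℕ) (c : ℤ) (v w : Fin n → ℤ) :
    reflectPrefix A k (v - c • w) = reflectPrefix A k v - c • reflectPrefix A k w := by
  induction k generalizing v w with
  | zero => rfl
  | succ k ih => simp only [reflectPrefix_succ, Rnat_sub_smul, ih]

theorem Rmap_single (i j : Fin n) :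
    Rmap A j (Pi.single i 1) = Pi.single i 1 - A j i • Pi.single j 1 := by
  simp [Rmap, Pi.single_apply]

theorem reflectPrefix_succ_single (i : Fin n) {k : ℕ} (hk : k < n) :
    reflectPrefix A (k + 1) (Pi.single i 1)
      = reflectPrefix A k (Pi.single i 1) - A ⟨k, hk⟩ i • betaPlus A ⟨k, hk⟩ := by
  rw [reflectPrefix_succ, Rnat, dif_pos hk, Rmap_single, reflectPrefix_sub_smul]
  rfl

theorem filter_val_lt_succ {k : ℕ} (hk : k < n) :
    univ.filter (fun j : Fin n => j.val < k + 1)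
      = insert ⟨k, hk⟩ (univ.filter (fun j : Fin n => j.val < k)) := by
  ext j
  simp only [mem_filter, mem_univ, true_and, mem_insert, Fin.ext_iff]
  omega

theorem reflectPrefix_single_add_sum (i : Fin n) {k : ℕ} (hk : k ≤ i.val) :
    reflectPrefix A k (Pi.single i 1)
      + ∑ j ∈ univ.filter (fun j : Fin n => j.val < k), A j i • betaPlus A j
      = Pi.single i 1 := by
  induction k with
  | zero => simp [reflectPrefix_zero]
  | succ k ih =>
    have hkn : k < n := by omega
    rw [reflectPrefix_succ_single A i hkn, filter_val_lt_succ hkn,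
      sum_insert (by simp)]
    conv_rhs => rw [← ih (by omega)]
    abel

end

theorem statement0_general (n : ℕ) (A : Matrix (Fin n) (Fin n) ℤ) (i : Fin n) :
    betaPlus A i + ∑ j ∈ Finset.univ.filter (fun j => j < i), A j i • betaPlus A j
      = Pi.single i (1 : ℤ) :=
  reflectPrefix_single_add_sum A i le_rfl

/-- `β_i^+ + Σ_{j<i} a_{ji} β_j^+ = e_i`, i.e.
`s_1⋯s_{i−1}α_i + Σ_{j<i} a_{ji}·s_1⋯s_{j−1}α_j = α_i`. -/
theorem statement0 (n : ℕ) (hn : 1 ≤ n) (A : Matrix (Fin n) (Fin n) ℤ) (i : Fin n) :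
    betaPlus A i + ∑ j ∈ Finset.univ.filter (fun j => j < i), A j i • betaPlus A j
      = Pi.single i (1 : ℤ) :=
  statement0_general n A i
end

section
/- For every 1 ≤ i ≤ n one has (Id − S_1∘S_2∘⋯∘S_n)(e_i) = A·β_i^+. That is, the endomorphism 1 − c of the weight lattice, where c = s_1 s_2 ⋯ s_n is the Coxeter element, sends the fundamental weight ω_i to the root β_i^+ = s_1⋯s_{i−1}α_i. -/
/-!
The matrix `A` intertwines the two actions: `S_j (A w) = A (R_j w)`. Moreover `S_j` fixes `e_i`
for `j ≠ i`, while `S_i e_i = e_i - A e_i`. Hence in `c e_i = S_1 ⋯ S_n e_i` the factors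
`S_{i+1}, …, S_n` act trivially, and pushing `S_1 ⋯ S_{i-1}` through `A` gives
`c e_i = e_i - A (R_1 ⋯ R_{i-1} e_i) = e_i - A β_i^+`.
-/

open Finset

/-- The simple reflection `s_i` acting on the weight lattice in the basis of
fundamental weights. -/
def Smap {n : ℕ} (A : Matrix (Fin n) (Fin n) ℤ) (i : Fin n) (v : Fin n → ℤ) : Fin n → ℤ :=
  v - (v i) • (fun ℓ => A ℓ i)

/-- The Coxeter element `c = s_1 s_2 ⋯ s_n` acting on the weight lattice:
`S_1 ∘ S_2 ∘ ⋯ ∘ S_n`. -/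
def coxS {n : ℕ} (A : Matrix (Fin n) (Fin n) ℤ) (v : Fin n → ℤ) : Fin n → ℤ :=
  (List.finRange n).foldr (fun j w => Smap A j w) v

open Matrix

section

variable {n : ℕ} (A : Matrix (Fin n) (Fin n) ℤ)

theorem smap_mulVec (j : Fin n) (w : Fin n → ℤ) :
    Smap A j (A *ᵥ w) = A *ᵥ Rmap A j w := by
  rw [Smap, Rmap, mulVec_sub, mulVec_smul, mulVec_single_one]
  rfl

theorem smap_single_of_ne {i j : Fin n} (h : j ≠ i) :
    Smap A j (Pi.single i 1) = Pi.single i 1 := by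
  simp [Smap, Pi.single_eq_of_ne h]

theorem smap_single_self (i : Fin n) :
    Smap A i (Pi.single i 1) = Pi.single i 1 - A *ᵥ Pi.single i 1 := by
  rw [mulVec_single_one, Smap, Pi.single_eq_same, one_smul]
  rfl

theorem smap_single_sub_mulVec {i j : Fin n} (h : j ≠ i) (w : Fin n → ℤ) :
    Smap A j (Pi.single i 1 - A *ᵥ w) = Pi.single i 1 - A *ᵥ Rmap A j w := by
  have hsub : Smap A j (Pi.single i 1 - A *ᵥ w)
      = Smap A j (Pi.single i 1) - Smap A j (A *ᵥ w) := by
    funext ℓ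
    simp only [Smap, Pi.sub_apply, Pi.smul_apply, smul_eq_mul]
    ring
  rw [hsub, smap_single_of_ne A h, smap_mulVec]

theorem foldr_smap_single_of_notMem {i : Fin n} {L : List (Fin n)} (hi : i ∉ L) :
    L.foldr (Smap A) (Pi.single i 1) = Pi.single i 1 := by
  induction L with
  | nil => rfl
  | cons j L ih =>
    rw [List.mem_cons, not_or] at hi
    rw [List.foldr_cons, ih hi.2, smap_single_of_ne A (Ne.symm hi.1)]

theorem foldr_smap_single_sub_mulVec {i : Fin n} {L : List (Fin n)} (hi : i ∉ L)
    (w : Fin n → ℤ) :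
    L.foldr (Smap A) (Pi.single i 1 - A *ᵥ w) = Pi.single i 1 - A *ᵥ L.foldr (Rmap A) w := by
  induction L with
  | nil => rfl
  | cons j L ih =>
    rw [List.mem_cons, not_or] at hi
    rw [List.foldr_cons, List.foldr_cons, ih hi.2, smap_single_sub_mulVec A (Ne.symm hi.1)]

theorem rnat_val (j : Fin n) : Rnat A j = Rmap A j :=
  funext fun _ => dif_pos j.isLt

theorem betaPlus_eq_foldr_take (i : Fin n) :
    betaPlus A i = ((List.finRange n).take i).foldr (Rmap A) (Pi.single i 1) := by
  have hrange : List.range i = ((List.finRange n).take i).map Fin.val := by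
    rw [List.map_take, List.map_coe_finRange_eq_range, List.take_range, min_eq_left i.is_le']
  rw [betaPlus, hrange, List.foldr_map]
  simp only [rnat_val]

theorem finRange_eq_take_cons_drop (i : Fin n) :
    List.finRange n = (List.finRange n).take i ++ i :: (List.finRange n).drop (i + 1) := by
  have hi : (i : ℕ) < (List.finRange n).length := by simp
  conv_lhs => rw [← List.take_append_drop (i + 1) (List.finRange n), List.take_add_one,
    List.getElem?_eq_getElem hi, List.getElem_finRange]
  simp

theorem coxS_single (i : Fin n) :
    coxS A (Pi.single i 1) = Pi.single i 1 - A *ᵥ betaPlus A i := by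
  have hnodup := finRange_eq_take_cons_drop i ▸ List.nodup_finRange n
  obtain ⟨hleft, hright⟩ :
      i ∉ (List.finRange n).take i ∧ i ∉ (List.finRange n).drop (i + 1) := by
    simpa using (List.nodup_middle.mp hnodup).notMem
  rw [coxS, finRange_eq_take_cons_drop i, List.foldr_append, List.foldr_cons,
    foldr_smap_single_of_notMem A hright, smap_single_self,
    foldr_smap_single_sub_mulVec A hleft, betaPlus_eq_foldr_take]

end

theorem statement3_general (n : ℕ) (A : Matrix (Fin n) (Fin n) ℤ) (i : Fin n) :
    Pi.single i (1 : ℤ) - coxS A (Pi.single i (1 : ℤ)) = A.mulVec (betaPlus A i) := by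
  rw [coxS_single, sub_sub_cancel]

/-- `(Id − S_1∘S_2∘⋯∘S_n)(e_i) = A·β_i^+`: the endomorphism `1 - c` of the weight
lattice sends the fundamental weight `ω_i` to the root `β_i^+ = s_1⋯s_{i−1}α_i`. -/
theorem statement3 (n : ℕ) (hn : 1 ≤ n) (A : Matrix (Fin n) (Fin n) ℤ) (i : Fin n) :
    Pi.single i (1 : ℤ) - coxS A (Pi.single i (1 : ℤ)) = A.mulVec (betaPlus A i) :=
  statement3_general n A i
end

section
/- Assume a_{ii} = 2 for all i. Then for every 1 ≤ j ≤ n, (S_1∘S_2∘⋯∘S_n)(e_j + Σ_{ℓ<j} a_{ℓj} e_ℓ) = −(e_j + Σ_{ℓ>j} a_{ℓj} e_ℓ). Equivalently, in the weight lattice, ω_j + Σ_{ℓ<j} a_{ℓj} ω_ℓ = −c^{−1}(ω_j + Σ_{ℓ>j} a_{ℓj} ω_ℓ), where c = s_1⋯s_n is the Coxeter element. -/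
open Finset

/-!
The vector `v = e_j + Σ_{ℓ<j} a_{ℓj} e_ℓ` has no coordinates above `j`, so `S_n, …, S_{j+1}`
fix it. Since `a_{jj} = 2`, the single reflection `S_j` subtracts column `j` of `A` and turns `v`
into `-(e_j + Σ_{ℓ>j} a_{ℓj} e_ℓ)`, which has no coordinates below `j`, so `S_{j-1}, …, S_1` fix
it in turn.
-/

theorem sum_filter_smul_single_apply {ι R : Type*} [Fintype ι] [DecidableEq ι] [Semiring R]
    (p : ι → Prop) [DecidablePred p] (c : ι → R) (i : ι) :
    (∑ ℓ ∈ univ.filter p, c ℓ • Pi.single ℓ (1 : R)) i = if p i then c i else 0 := by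
  simp [Finset.sum_apply, Pi.single_apply]

section Coxeter

variable {n : ℕ} (A : Matrix (Fin n) (Fin n) ℤ)

theorem Smap_of_apply_eq_zero {i : Fin n} {v : Fin n → ℤ} (h : v i = 0) : Smap A i v = v := by
  simp [Smap, h]

theorem foldr_Smap_of_forall_apply_eq_zero {l : List (Fin n)} {v : Fin n → ℤ}
    (h : ∀ i ∈ l, v i = 0) : l.foldr (Smap A) v = v := by
  induction l with
  | nil => rfl
  | cons a l ih =>
    rw [List.foldr_cons, ih fun i hi => h i (List.mem_cons_of_mem a hi)]
    exact Smap_of_apply_eq_zero A (h a List.mem_cons_self)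

theorem coxS_eq_Smap {j : Fin n} {v : Fin n → ℤ} (hv : ∀ i, j < i → v i = 0)
    (hSv : ∀ i, i < j → Smap A j v i = 0) : coxS A v = Smap A j v := by
  obtain ⟨s, t, hst⟩ := List.append_of_mem (List.mem_finRange j)
  have hsorted := List.pairwise_lt_finRange n
  rw [hst, List.pairwise_append, List.pairwise_cons] at hsorted
  obtain ⟨-, ⟨hjt, -⟩, hsj⟩ := hsorted
  have hfix_t : t.foldr (Smap A) v = v :=
    foldr_Smap_of_forall_apply_eq_zero A fun i hi => hv i (hjt i hi)
  have hfix_s : s.foldr (Smap A) (Smap A j v) = Smap A j v :=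
    foldr_Smap_of_forall_apply_eq_zero A fun i hi => hSv i (hsj i hi j List.mem_cons_self)
  unfold coxS
  rw [hst, List.foldr_append, List.foldr_cons, hfix_t, hfix_s]

theorem Smap_single_add_sum_lt {j : Fin n} (hj : A j j = 2) :
    Smap A j (Pi.single j 1 + ∑ ℓ ∈ univ.filter (· < j), A ℓ j • Pi.single ℓ 1)
      = -(Pi.single j 1 + ∑ ℓ ∈ univ.filter (j < ·), A ℓ j • Pi.single ℓ 1) := by
  funext i
  simp only [Smap, Pi.sub_apply, Pi.add_apply, Pi.neg_apply, Pi.smul_apply,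
    sum_filter_smul_single_apply, Pi.single_apply, smul_eq_mul]
  rcases lt_trichotomy i j with h | rfl | h
  · simp [h, h.ne, h.not_gt]
  · simp [hj]
  · simp [h, h.ne', h.not_gt]

end Coxeter

theorem statement4_general (n : ℕ) (A : Matrix (Fin n) (Fin n) ℤ)
    (hdiag : ∀ i, A i i = 2) (j : Fin n) :
    coxS A (Pi.single j (1 : ℤ) +
        ∑ ℓ ∈ Finset.univ.filter (fun ℓ => ℓ < j), A ℓ j • Pi.single ℓ (1 : ℤ))
      = -(Pi.single j (1 : ℤ) +
        ∑ ℓ ∈ Finset.univ.filter (fun ℓ => j < ℓ), A ℓ j • Pi.single ℓ (1 : ℤ)) := by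
  have hstep := Smap_single_add_sum_lt A (hdiag j)
  rw [coxS_eq_Smap A (j := j), hstep]
  · intro i hi
    simp [Pi.single_apply, hi.ne', hi.not_gt]
  · intro i hi
    rw [hstep]
    simp [Pi.single_apply, hi.ne, hi.not_gt]

/-- If `a_{ii} = 2` for all `i`, then
`(S_1∘⋯∘S_n)(e_j + Σ_{ℓ<j} a_{ℓj} e_ℓ) = −(e_j + Σ_{ℓ>j} a_{ℓj} e_ℓ)`, i.e. in the
weight lattice `ω_j + Σ_{ℓ<j} a_{ℓj} ω_ℓ = −c^{−1}(ω_j + Σ_{ℓ>j} a_{ℓj} ω_ℓ)`. -/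
theorem statement4 (n : ℕ) (hn : 1 ≤ n) (A : Matrix (Fin n) (Fin n) ℤ)
    (hdiag : ∀ i, A i i = 2) (j : Fin n) :
    coxS A (Pi.single j (1 : ℤ) +
        ∑ ℓ ∈ Finset.univ.filter (fun ℓ => ℓ < j), A ℓ j • Pi.single ℓ (1 : ℤ))
      = -(Pi.single j (1 : ℤ) +
        ∑ ℓ ∈ Finset.univ.filter (fun ℓ => j < ℓ), A ℓ j • Pi.single ℓ (1 : ℤ)) :=
  statement4_general n A hdiag j
end

section
/- Assume a_{ii} = 2 for all i. For every integer k ≥ 0 and every 1 ≤ i ≤ n, let v = (v_1, …, v_n) := (R_1∘⋯∘R_n)^k(β_i^+) ∈ ℤ^n (the coordinates of c^k β_i^+ in the basis of simple roots). Then (S_1∘⋯∘S_n)^k(e_i) = Σ_{j=1}^n v_j (e_j + Σ_{ℓ<j} a_{ℓj} e_ℓ). Equivalently, in the weight lattice, c^k ω_i = Σ_{j=1}^n [c^k β_i^+ : α_j] (ω_j + Σ_{ℓ<j} a_{ℓj} ω_ℓ), where c = s_1⋯s_n and [β : α_j] denotes the coefficient of α_j in the simple-root expansion of β. -/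
/-!
Let `T = I + U`, where `U` is the strictly upper triangular part of `A`. Both Coxeter elements
are computed by a triangular sweep, and in the coordinates `T v` both act as `T v ↦ T v - A v`:
for `S_1 ∘ ⋯ ∘ S_n` because `S_j` only reads the `j`-th coordinate, which at that moment equals
`v_j`; for `R_1 ∘ ⋯ ∘ R_n` because `R_ℓ` sees the coordinates above `ℓ` already updated. Hence
`T ∘ c_R = c_S ∘ T`. The right-hand side of the theorem is `T (c_R^k β_i^+)`, and
`T β_i^+ = e_i` by the same sweep, stopped after `i - 1` steps.
-/

open Finset

/-- The Coxeter element `c = s_1 ⋯ s_n` acting on the root lattice: `R_1 ∘ ⋯ ∘ R_n`. -/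
def coxR {n : ℕ} (A : Matrix (Fin n) (Fin n) ℤ) (v : Fin n → ℤ) : Fin n → ℤ :=
  (List.finRange n).foldr (fun j w => Rmap A j w) v

theorem List.foldr_finRange_eq_foldr_range {α : Type*} {n : ℕ} (f : Fin n → α → α) (x : α) :
    (List.finRange n).foldr f x
      = (List.range n).foldr (fun j y => if h : j < n then f ⟨j, h⟩ y else y) x := by
  rw [← List.map_coe_finRange_eq_range, List.foldr_map]
  congr 1
  funext j y
  simp [j.isLt]

theorem Finset.sum_eq_sum_filter_le_add_sum_filter_lt {ι M : Type*} [Fintype ι] [LinearOrder ι]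
    [AddCommMonoid M] (f : ι → M) (ℓ : ι) :
    ∑ j, f j = ∑ j ∈ univ.filter (· ≤ ℓ), f j + ∑ j ∈ univ.filter (ℓ < ·), f j := by
  simpa only [not_le] using (sum_filter_add_sum_filter_not univ (· ≤ ℓ) f).symm

section CoxeterCoordinates

open Matrix

variable {n : ℕ} (A : Matrix (Fin n) (Fin n) ℤ)

def Snat (j : ℕ) (v : Fin n → ℤ) : Fin n → ℤ :=
  if h : j < n then Smap A ⟨j, h⟩ v else v

/-- `T = I + U`, with `U` the strictly upper triangular part of `A`, acting on `ℤ^n`;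
its columns are the vectors `e_j + Σ_{ℓ<j} a_{ℓj} e_ℓ` of the theorem. -/
def unitriUpper (v : Fin n → ℤ) : Fin n → ℤ :=
  fun ℓ => v ℓ + ∑ j ∈ univ.filter (ℓ < ·), A ℓ j * v j

theorem coxR_eq_foldr_range (v : Fin n → ℤ) : coxR A v = (List.range n).foldr (Rnat A) v :=
  List.foldr_finRange_eq_foldr_range _ _

theorem coxS_eq_foldr_range (v : Fin n → ℤ) : coxS A v = (List.range n).foldr (Snat A) v :=
  List.foldr_finRange_eq_foldr_range _ _

theorem unitriUpper_apply_congr {v w : Fin n → ℤ} {ℓ : Fin n} (h : ∀ j, ℓ ≤ j → v j = w j) :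
    unitriUpper A v ℓ = unitriUpper A w ℓ := by
  unfold unitriUpper
  rw [h ℓ le_rfl, sum_congr rfl fun j hj => by rw [h j (mem_filter.1 hj).2.le]]

theorem unitriUpper_sub_mulVec_apply (v : Fin n → ℤ) (ℓ : Fin n) :
    (unitriUpper A v - A *ᵥ v) ℓ = v ℓ - ∑ j ∈ univ.filter (· ≤ ℓ), A ℓ j * v j := by
  rw [Pi.sub_apply, unitriUpper, Matrix.mulVec, dotProduct, sum_eq_sum_filter_le_add_sum_filter_lt _ ℓ]
  ring

theorem Rnat_apply_of_ne {m : ℕ} {j : Fin n} (h : j.val ≠ m) (v : Fin n → ℤ) :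
    Rnat A m v j = v j := by
  unfold Rnat
  split_ifs <;> simp [Rmap, Fin.ext_iff, h]

theorem Rnat_val_apply_self (i : Fin n) (v : Fin n → ℤ) :
    Rnat A i.val v i = v i - ∑ j, A i j * v j := by
  simp [Rnat, Rmap]

theorem foldr_Rnat_apply_of_le (m : ℕ) (v : Fin n → ℤ) {ℓ : Fin n} (hℓ : m ≤ ℓ.val) :
    (List.range m).foldr (Rnat A) v ℓ = v ℓ := by
  induction m generalizing v with
  | zero => rfl
  | succ m ih =>
    rw [List.range_succ, List.foldr_append, List.foldr_cons, List.foldr_nil, ih _ (by omega),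
      Rnat_apply_of_ne A (by omega)]

/-- The right-hand side is the `ℓ`-th entry of `(T - A) v`: when `R_ℓ` acts, the coordinates
above `ℓ` already have their final values, so `T` absorbs exactly the upper part of row `ℓ`. -/
theorem unitriUpper_foldr_Rnat_apply {m : ℕ} (hm : m ≤ n) (v : Fin n → ℤ) {ℓ : Fin n}
    (hℓ : ℓ.val < m) :
    unitriUpper A ((List.range m).foldr (Rnat A) v) ℓ
      = v ℓ - ∑ j ∈ univ.filter (· ≤ ℓ), A ℓ j * v j := by
  induction m generalizing v with
  | zero => omega
  | succ m ih =>
    rw [List.range_succ, List.foldr_append, List.foldr_cons, List.foldr_nil]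
    rcases Nat.lt_or_ge ℓ.val m with hlt | hge
    · rw [ih (by omega) _ hlt, Rnat_apply_of_ne A (by omega)]
      congr 1
      refine sum_congr rfl fun j hj => ?_
      rw [Rnat_apply_of_ne A ((Fin.le_iff_val_le_val.1 (mem_filter.1 hj).2).trans_lt hlt).ne]
    · obtain rfl : m = ℓ.val := by omega
      have hupper : ∀ j ∈ univ.filter (ℓ < ·), A ℓ j * Rnat A ℓ.val v j = A ℓ j * v j :=
        fun j hj => by rw [Rnat_apply_of_ne A (Fin.val_ne_of_ne (mem_filter.1 hj).2.ne')]
      rw [unitriUpper_apply_congr A fun j hj => foldr_Rnat_apply_of_le A ℓ.val _ hj, unitriUpper,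
        sum_congr rfl hupper, Rnat_val_apply_self, sum_eq_sum_filter_le_add_sum_filter_lt _ ℓ]
      ring

theorem unitriUpper_coxR (v : Fin n → ℤ) :
    unitriUpper A (coxR A v) = unitriUpper A v - A *ᵥ v := by
  funext ℓ
  rw [coxR_eq_foldr_range, unitriUpper_foldr_Rnat_apply A le_rfl v ℓ.isLt,
    unitriUpper_sub_mulVec_apply]

theorem Snat_val (i : Fin n) : Snat A i.val = Smap A i :=
  funext fun _ => dif_pos i.isLt

/-- The value of `S_{m+1} ∘ ⋯ ∘ S_n` on `T v` (with 1-based `S`, while `m` and `p` are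
0-based): each `S_p` reads the coordinate `v_p` and subtracts `v_p` times column `p` of `A`. -/
def partialImage (v : Fin n → ℤ) (m : ℕ) : Fin n → ℤ :=
  unitriUpper A v - ∑ p ∈ univ.filter (fun p : Fin n => m ≤ p.val), v p • fun ℓ => A ℓ p

theorem Smap_partialImage (v : Fin n → ℤ) (i : Fin n) :
    Smap A i (partialImage A v (i.val + 1)) = partialImage A v i.val := by
  have hfilter : univ.filter (fun p : Fin n => i.val ≤ p.val)
      = insert i (univ.filter (fun p : Fin n => i.val + 1 ≤ p.val)) := by
    ext p
    simp only [mem_filter, mem_univ, true_and, mem_insert, Fin.ext_iff]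
    omega
  have hcoord : partialImage A v (i.val + 1) i = v i := by
    simp only [partialImage, unitriUpper, Pi.sub_apply, Finset.sum_apply, Pi.smul_apply,
      smul_eq_mul]
    have hupper : ∑ p ∈ univ.filter (fun p : Fin n => i.val + 1 ≤ p.val), v p * A i p
        = ∑ j ∈ univ.filter (i < ·), A i j * v j :=
      sum_congr (by ext p; simp only [mem_filter, mem_univ, true_and, Fin.lt_def]; omega)
        fun _ _ => mul_comm _ _
    rw [hupper, add_sub_cancel_right]
  rw [Smap, hcoord, partialImage, partialImage, hfilter, sum_insert (by simp)]
  abel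

theorem foldr_Snat_partialImage (v : Fin n → ℤ) {m : ℕ} (hm : m ≤ n) :
    (List.range m).foldr (Snat A) (partialImage A v m) = partialImage A v 0 := by
  induction m with
  | zero => rfl
  | succ m ih =>
    rw [List.range_succ, List.foldr_append, List.foldr_cons, List.foldr_nil,
      ← Fin.val_mk (show m < n by omega), Snat_val, Smap_partialImage, Fin.val_mk, ih (by omega)]

theorem coxS_unitriUpper (v : Fin n → ℤ) :
    coxS A (unitriUpper A v) = unitriUpper A v - A *ᵥ v := by
  have hn : partialImage A v n = unitriUpper A v := by
    simp [partialImage, filter_false_of_mem fun (p : Fin n) _ => not_le.2 p.isLt]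
  have h0 : partialImage A v 0 = unitriUpper A v - A *ᵥ v := by
    funext ℓ
    simp [partialImage, mulVec, dotProduct, Finset.sum_apply, mul_comm]
  rw [← h0, coxS_eq_foldr_range, ← hn, foldr_Snat_partialImage A v le_rfl]

theorem semiconj_unitriUpper_coxR_coxS : Function.Semiconj (unitriUpper A) (coxR A) (coxS A) :=
  fun v => by rw [unitriUpper_coxR, coxS_unitriUpper]

theorem unitriUpper_betaPlus (i : Fin n) : unitriUpper A (betaPlus A i) = Pi.single i 1 := by
  funext ℓ
  rcases Nat.lt_or_ge ℓ.val i.val with hlt | hge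
  · have hzero : ∀ j ∈ univ.filter (· ≤ ℓ), A ℓ j * (Pi.single i 1 : Fin n → ℤ) j = 0 :=
      fun j hj => by
      rw [Pi.single_eq_of_ne ((mem_filter.1 hj).2.trans_lt (Fin.lt_def.2 hlt)).ne, mul_zero]
    rw [betaPlus, unitriUpper_foldr_Rnat_apply A i.isLt.le _ hlt, sum_eq_zero hzero, sub_zero]
  · have hzero : ∀ j ∈ univ.filter (ℓ < ·), A ℓ j * (Pi.single i 1 : Fin n → ℤ) j = 0 :=
      fun j hj => by
      rw [Pi.single_eq_of_ne (Fin.le_def.2 hge |>.trans_lt (mem_filter.1 hj).2).ne', mul_zero]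
    rw [betaPlus, unitriUpper_apply_congr A fun j hj =>
      foldr_Rnat_apply_of_le A i.val _ (hge.trans (Fin.le_iff_val_le_val.1 hj)), unitriUpper,
      sum_eq_zero hzero, add_zero]

theorem sum_smul_column_eq_unitriUpper (v : Fin n → ℤ) :
    ∑ j, v j • (Pi.single j 1 + ∑ ℓ ∈ univ.filter (· < j), A ℓ j • Pi.single ℓ 1)
      = unitriUpper A v := by
  funext ℓ
  simp only [Finset.sum_apply, Pi.add_apply, Pi.smul_apply, Pi.single_apply, smul_eq_mul,
    mul_ite, mul_one, mul_zero, sum_ite_eq, mem_filter, mem_univ, true_and]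
  simp only [unitriUpper, mul_add, sum_add_distrib, mul_ite, mul_one, mul_zero, sum_ite_eq,
    mem_univ, if_true, sum_filter, mul_comm]

end CoxeterCoordinates

theorem statement5_general (n : ℕ) (A : Matrix (Fin n) (Fin n) ℤ) (k : ℕ) (i : Fin n) :
    (coxS A)^[k] (Pi.single i (1 : ℤ))
      = ∑ j : Fin n, ((coxR A)^[k] (betaPlus A i)) j •
          (Pi.single j (1 : ℤ) +
            ∑ ℓ ∈ Finset.univ.filter (fun ℓ => ℓ < j), A ℓ j • Pi.single ℓ (1 : ℤ)) := by
  rw [sum_smul_column_eq_unitriUpper, (semiconj_unitriUpper_coxR_coxS A).iterate_right k,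
    unitriUpper_betaPlus]

/-- If `a_{ii} = 2` for all `i`, then for `k ≥ 0`, writing `v = c^k β_i^+` in simple
root coordinates, one has `c^k ω_i = Σ_j v_j (ω_j + Σ_{ℓ<j} a_{ℓj} ω_ℓ)`, i.e.
`c^k ω_i = Σ_j [c^k β_i^+ : α_j] (ω_j + Σ_{ℓ<j} a_{ℓj} ω_ℓ)`. -/
theorem statement5 (n : ℕ) (hn : 1 ≤ n) (A : Matrix (Fin n) (Fin n) ℤ)
    (hdiag : ∀ i, A i i = 2) (k : ℕ) (i : Fin n) :
    (coxS A)^[k] (Pi.single i (1 : ℤ))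
      = ∑ j : Fin n, ((coxR A)^[k] (betaPlus A i)) j •
          (Pi.single j (1 : ℤ) +
            ∑ ℓ ∈ Finset.univ.filter (fun ℓ => ℓ < j), A ℓ j • Pi.single ℓ (1 : ℤ)) :=
  statement5_general n A k i
end

section
/- Let B = (b_{ij}) be an n×n skew-symmetrizable integer matrix with b_{ij} ≥ 0 whenever i < j. Define B_0 := B and B_ℓ := μ_{⟨ℓ⟩}(B_{ℓ−1}) for ℓ ≥ 1 (mutation of n×n matrices along the cyclic sequence of directions 1, 2, …, n, 1, 2, …). Then for every ℓ ≥ 0, writing r ∈ {0, …, n−1} for the residue of ℓ modulo n, one has (B_ℓ)_{ij} = −b_{ij} if exactly one of i, j belongs to {1, …, r}, and (B_ℓ)_{ij} = b_{ij} otherwise. In particular, B_ℓ depends only on ℓ modulo n (the sequence of principal parts is n-periodic), and the entries of every B_ℓ have the same absolute values as the corresponding entries of B. -/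
open Finset

/-- `⟨m⟩ ∈ {1, …, n}` (0-indexed as an element of `Fin n`): the unique element of
`{1, …, n}` congruent to `m` modulo `n`. -/
def idx (n : ℕ) (hn : 0 < n) (m : ℤ) : Fin n :=
  ⟨((m - 1) % (n : ℤ)).toNat, by
    have h0 : (0 : ℤ) < (n : ℤ) := Int.natCast_pos.mpr hn
    have h1 : 0 ≤ (m - 1) % (n : ℤ) := Int.emod_nonneg _ (ne_of_gt h0)
    have h2 : (m - 1) % (n : ℤ) < (n : ℤ) := Int.emod_lt_of_pos _ h0
    omega⟩

/-- `B` is skew-symmetrizable: `DB` is skew-symmetric for some diagonal `D` with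
positive diagonal entries. -/
def IsSkewSymmetrizable {n : ℕ} (B : Matrix (Fin n) (Fin n) ℤ) : Prop :=
  ∃ d : Fin n → ℚ, (∀ i, 0 < d i) ∧ ∀ i j, d i * (B i j : ℚ) = -(d j * (B j i : ℚ))

/-- Matrix mutation `μ_k` of an `n×n` exchange matrix. -/
def mutSq {n : ℕ} (k : Fin n) (M : Matrix (Fin n) (Fin n) ℤ) : Matrix (Fin n) (Fin n) ℤ :=
  Matrix.of fun i j =>
    if i = k ∨ j = k then -M i j
    else M i j + max (M i k) 0 * max (M k j) 0 - max (-M i k) 0 * max (-M k j) 0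

/-- `B_ℓ`: iterated mutation of `B` along the cyclic sequence of directions
`⟨1⟩, ⟨2⟩, …, ⟨n⟩, ⟨1⟩, …`. -/
def Bseq {n : ℕ} (hn : 0 < n) (B : Matrix (Fin n) (Fin n) ℤ) :
    ℕ → Matrix (Fin n) (Fin n) ℤ
  | 0 => B
  | ℓ + 1 => mutSq (idx n hn ((ℓ : ℤ) + 1)) (Bseq hn B ℓ)

/-- Mutating an acyclic skew-symmetrizable matrix along the cyclic sequence of
directions `1, 2, …, n, 1, 2, …` only flips signs: with `r = ℓ % n`,
`(B_ℓ)_{ij} = −b_{ij}` if exactly one of `i, j` lies in `{1, …, r}` and `b_{ij}`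
otherwise; in particular the sequence is `n`-periodic and absolute values of
entries are preserved. -/
theorem statement12 (n : ℕ) (hn : 0 < n) (B : Matrix (Fin n) (Fin n) ℤ)
    (hskew : IsSkewSymmetrizable B)
    (hacyclic : ∀ i j : Fin n, i < j → 0 ≤ B i j) :
    (∀ (ℓ : ℕ) (i j : Fin n),
      Bseq hn B ℓ i j
        = if (((i : ℕ) < ℓ % n) ↔ ((j : ℕ) < ℓ % n)) then B i j else -B i j) ∧
    (∀ ℓ : ℕ, Bseq hn B (ℓ + n) = Bseq hn B ℓ) ∧
    (∀ (ℓ : ℕ) (i j : Fin n), |Bseq hn B ℓ i j| = |B i j|) := by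
  obtain ⟨d, hd, hds⟩ := hskew
  have hdiag : ∀ i, B i i = 0 := by
    intro i
    have h0 : d i * (B i i : ℚ) = 0 := by linarith [hds i i]
    have : (B i i : ℚ) = 0 := by
      rcases mul_eq_zero.mp h0 with h | h
      · exact absurd h (ne_of_gt (hd i))
      · exact h
    exact_mod_cast this
  have hneg : ∀ i j : Fin n, i < j → B j i ≤ 0 := by
    intro i j hij
    have hBij : (0 : ℚ) ≤ (B i j : ℚ) := by exact_mod_cast hacyclic i j hij
    have h1 : d j * (B j i : ℚ) ≤ 0 := by
      have := mul_nonneg (le_of_lt (hd i)) hBij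
      linarith [hds i j]
    have : (B j i : ℚ) ≤ 0 := by
      by_contra h
      push_neg at h
      have := mul_pos (hd j) h
      linarith
    exact_mod_cast this
  have key : ∀ (ℓ : ℕ) (i j : Fin n),
      Bseq hn B ℓ i j
        = if (((i : ℕ) < ℓ % n) ↔ ((j : ℕ) < ℓ % n)) then B i j else -B i j := by
    intro ℓ
    induction ℓ with
    | zero => intro i j; simp [Bseq]
    | succ ℓ IH =>
      intro i j
      obtain ⟨r, hrdef⟩ : ∃ r, ℓ % n = r := ⟨_, rfl⟩
      have hrn : r < n := hrdef ▸ Nat.mod_lt ℓ hn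
      simp only [hrdef] at IH
      set k := idx n hn ((ℓ : ℤ) + 1) with hkdef
      have hk : ((k : Fin n) : ℕ) = r := by
        show (((ℓ : ℤ) + 1 - 1) % (n : ℤ)).toNat = r
        rw [show (ℓ : ℤ) + 1 - 1 = (ℓ : ℤ) by ring, ← Int.natCast_mod,
          Int.toNat_natCast, hrdef]
      have hin : (i : ℕ) < n := i.isLt
      have hjn : (j : ℕ) < n := j.isLt
      have hmod : (ℓ + 1) % n = (r + 1) % n := by
        have hd0 : n * (ℓ / n) + ℓ % n = ℓ := Nat.div_add_mod ℓ n
        rw [show ℓ + 1 = (r + 1) + n * (ℓ / n) by omega]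
        exact Nat.add_mul_mod_self_left (r + 1) n (ℓ / n)
      have hA : ∀ a : Fin n, a ≠ k → Bseq hn B ℓ a k ≤ 0 := by
        intro a ha
        have hak : (a : ℕ) ≠ r := by
          rw [← hk]; exact fun h => ha (Fin.val_injective h)
        have han : (a : ℕ) < n := a.isLt
        rw [IH]
        by_cases hlt : (a : ℕ) < r
        · rw [if_neg (by rw [hk]; omega)]
          have hak2 : a < k := by rw [Fin.lt_def, hk]; omega
          linarith [hacyclic a k hak2]
        · rw [if_pos (by rw [hk]; omega)]
          exact hneg k a (by rw [Fin.lt_def, hk]; omega)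
      have hB : ∀ b : Fin n, b ≠ k → 0 ≤ Bseq hn B ℓ k b := by
        intro b hb
        have hbk : (b : ℕ) ≠ r := by
          rw [← hk]; exact fun h => hb (Fin.val_injective h)
        have hbn : (b : ℕ) < n := b.isLt
        rw [IH]
        by_cases hlt : (b : ℕ) < r
        · rw [if_neg (by rw [hk]; omega)]
          have hbk2 : b < k := by rw [Fin.lt_def, hk]; omega
          linarith [hneg b k hbk2]
        · rw [if_pos (by rw [hk]; omega)]
          exact hacyclic k b (by rw [Fin.lt_def, hk]; omega)
      have mutOn : ∀ a b : Fin n, (a = k ∨ b = k) →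
          mutSq k (Bseq hn B ℓ) a b = -(Bseq hn B ℓ a b) := by
        intro a b h
        unfold mutSq
        rw [Matrix.of_apply, if_pos h]
      have mutOff : ∀ a b : Fin n, a ≠ k → b ≠ k →
          mutSq k (Bseq hn B ℓ) a b = Bseq hn B ℓ a b := by
        intro a b ha hb
        unfold mutSq
        rw [Matrix.of_apply, if_neg (by tauto),
          max_eq_right (hA a ha), max_eq_right (neg_nonpos.mpr (hB b hb))]
        ring
      have hr' : (ℓ + 1) % n = if r + 1 = n then 0 else r + 1 := by
        rw [hmod]
        split_ifs with h
        · rw [h, Nat.mod_self]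
        · exact Nat.mod_eq_of_lt (by omega)
      show mutSq k (Bseq hn B ℓ) i j = _
      rw [hr']
      by_cases hik : i = k <;> by_cases hjk : j = k
      · subst hik; subst hjk
        rw [mutOn k k (Or.inl rfl), IH]
        simp [hdiag]
      · subst hik
        have hjr : (j : ℕ) ≠ r := by
          rw [← hk]; exact fun h => hjk (Fin.val_injective h)
        rw [mutOn k j (Or.inl rfl), IH, hk]
        split_ifs <;> first | (exfalso; omega) | ring
      · subst hjk
        have hir : (i : ℕ) ≠ r := by
          rw [← hk]; exact fun h => hik (Fin.val_injective h)
        rw [mutOn i k (Or.inr rfl), IH, hk]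
        split_ifs <;> first | (exfalso; omega) | ring
      · have hir : (i : ℕ) ≠ r := by
          rw [← hk]; exact fun h => hik (Fin.val_injective h)
        have hjr : (j : ℕ) ≠ r := by
          rw [← hk]; exact fun h => hjk (Fin.val_injective h)
        rw [mutOff i j hik hjk, IH]
        split_ifs <;> first | (exfalso; omega) | ring
  refine ⟨key, ?_, ?_⟩
  · intro ℓ
    ext i j
    rw [key, key, Nat.add_mod_right]
  · intro ℓ i j
    rw [key]
    split_ifs <;> simp [abs_neg]
end
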